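/- arXiv:1109.1728 — 2 statements merged into one kernel-verified Lean document; each statement's English description precedes it below -/
import Mathlib

section
/- Let C, K, S : ℝ → ℝ be smooth with S′(ψ) = a·C(ψ) for all ψ, where a ∈ ℝ is a constant, and let b, l ∈ ℝ. Then for every smooth function ψ : ℝ³ → ℝ of (t,x,z), the function v(t,x,z) = (b x + l)e^{a t} satisfies the adjoint irrigation equation C(ψ)v_t + K(ψ)(v_xx + v_zz) + K′(ψ)v_z − S′(ψ)v = 0 identically. Hence the irrigation equation C(ψ)ψ_t = (K(ψ)ψ_x)_x + (K(ψ)(ψ_z − 1))_z − S(ψ) is nonlinearly self-adjoint under the condition S′ = aC. -/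
noncomputable def Dt (u : ℝ → ℝ → ℝ → ℝ) : ℝ → ℝ → ℝ → ℝ := fun t x z => deriv (fun s => u s x z) t
noncomputable def Dx (u : ℝ → ℝ → ℝ → ℝ) : ℝ → ℝ → ℝ → ℝ := fun t x z => deriv (fun s => u t s z) x
noncomputable def Dz (u : ℝ → ℝ → ℝ → ℝ) : ℝ → ℝ → ℝ → ℝ := fun t x z => deriv (fun s => u t x s) z

def Smooth3 (u : ℝ → ℝ → ℝ → ℝ) : Prop :=
  ContDiff ℝ (⊤ : ℕ∞) (fun p : ℝ × ℝ × ℝ => u p.1 p.2.1 p.2.2)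

lemma aux_dt (a b l t x : ℝ) :
    deriv (fun s : ℝ => (b * x + l) * Real.exp (a * s)) t
      = (b * x + l) * (Real.exp (a * t) * a) := by
  have h : HasDerivAt (fun s : ℝ => (b * x + l) * Real.exp (a * s))
      ((b * x + l) * (Real.exp (a * t) * a)) t := by
    have h1 : HasDerivAt (fun s : ℝ => a * s) a t := by
      simpa using (hasDerivAt_id t).const_mul a
    exact ((Real.hasDerivAt_exp (a * t)).comp t h1).const_mul (b * x + l)
  exact h.deriv

lemma aux_dx (a b l t x : ℝ) :
    deriv (fun s : ℝ => (b * s + l) * Real.exp (a * t)) x = b * Real.exp (a * t) := by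
  have h : HasDerivAt (fun s : ℝ => (b * s + l) * Real.exp (a * t))
      (b * Real.exp (a * t)) x := by
    have h1 : HasDerivAt (fun s : ℝ => b * s + l) b x := by
      simpa using (((hasDerivAt_id x).const_mul b).add_const l)
    simpa using h1.mul_const (Real.exp (a * t))
  exact h.deriv

theorem irrigation_nonlinearly_self_adjoint
    (C K S : ℝ → ℝ) (hC : ContDiff ℝ (⊤ : ℕ∞) C) (hK : ContDiff ℝ (⊤ : ℕ∞) K) (hS : ContDiff ℝ (⊤ : ℕ∞) S)
    (a : ℝ) (hSC : ∀ ψ : ℝ, deriv S ψ = a * C ψ) (b l : ℝ)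
    (ψ : ℝ → ℝ → ℝ → ℝ) (hψ : Smooth3 ψ) :
    ∀ t x z : ℝ,
      C (ψ t x z) * Dt (fun t x _ => (b * x + l) * Real.exp (a * t)) t x z
        + K (ψ t x z)
            * (Dx (Dx (fun t x _ => (b * x + l) * Real.exp (a * t))) t x z
              + Dz (Dz (fun t x _ => (b * x + l) * Real.exp (a * t))) t x z)
        + deriv K (ψ t x z) * Dz (fun t x _ => (b * x + l) * Real.exp (a * t)) t x z
        - deriv S (ψ t x z) * ((b * x + l) * Real.exp (a * t)) = 0 := by
  intro t x z
  have hdz : Dz (fun t x _ => (b * x + l) * Real.exp (a * t)) = fun _ _ _ => 0 := by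
    funext t x z
    simp [Dz]
  have hdx : Dx (fun t x _ => (b * x + l) * Real.exp (a * t))
      = fun t _ _ => b * Real.exp (a * t) := by
    funext t x z
    simp only [Dx]
    exact aux_dx a b l t x
  rw [hdz, hdx]
  have hdxx : Dx (fun t _ _ => b * Real.exp (a * t)) t x z = 0 := by
    simp [Dx]
  have hdzz : Dz (fun _ _ _ => (0 : ℝ)) t x z = 0 := by
    simp [Dz]
  have hdt : Dt (fun t x _ => (b * x + l) * Real.exp (a * t)) t x z
      = (b * x + l) * (Real.exp (a * t) * a) := by
    simp only [Dt]
    exact aux_dt a b l t x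
  rw [hdxx, hdzz, hdt, hSC]
  ring
end

section
/- For all smooth functions ψ, v, ρ : ℝ³ → ℝ of (t,x,z) and constants g, f, N ∈ ℝ, the pointwise identity D_x(−gρ + ψ_tx + ψ_z Δψ) + D_z(−fv + ψ_tz − ψ_x Δψ) = Δψ_t − gρ_x − f v_z − ψ_x Δψ_z + ψ_z Δψ_x holds, where Δψ = ψ_xx + ψ_zz and Δψ_t, Δψ_x, Δψ_z denote partial derivatives of Δψ. In particular, on solutions of the first Boussinesq equation Δψ_t − gρ_x − fv_z = ψ_x Δψ_z − ψ_z Δψ_x, the vector with components C¹ = 0, C² = −gρ + ψ_tx + ψ_z Δψ, C³ = −fv + ψ_tz − ψ_x Δψ is conserved. -/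
namespace Bouss

noncomputable def Dv (c : ℝ × ℝ × ℝ) (u : ℝ → ℝ → ℝ → ℝ) : ℝ → ℝ → ℝ → ℝ :=
  fun t x z => fderiv ℝ (fun p : ℝ × ℝ × ℝ => u p.1 p.2.1 p.2.2) (t, x, z) c

variable {u : ℝ → ℝ → ℝ → ℝ}

lemma slice_t (hu : Smooth3 u) (t x z : ℝ) :
    HasDerivAt (fun s => u s x z) (Dv (1, 0, 0) u t x z) t := by
  have hF : HasFDerivAt (fun p : ℝ × ℝ × ℝ => u p.1 p.2.1 p.2.2)
      (fderiv ℝ (fun p : ℝ × ℝ × ℝ => u p.1 p.2.1 p.2.2) (t, x, z)) (t, x, z) :=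
    (hu.differentiable (by simp) (t, x, z)).hasFDerivAt
  have hl : HasDerivAt (fun s : ℝ => ((s, x, z) : ℝ × ℝ × ℝ)) (1, 0, 0) t :=
    HasDerivAt.prodMk (hasDerivAt_id t) (hasDerivAt_const t ((x, z) : ℝ × ℝ))
  exact hF.comp_hasDerivAt t hl

lemma slice_x (hu : Smooth3 u) (t x z : ℝ) :
    HasDerivAt (fun s => u t s z) (Dv (0, 1, 0) u t x z) x := by
  have hF : HasFDerivAt (fun p : ℝ × ℝ × ℝ => u p.1 p.2.1 p.2.2)
      (fderiv ℝ (fun p : ℝ × ℝ × ℝ => u p.1 p.2.1 p.2.2) (t, x, z)) (t, x, z) :=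
    (hu.differentiable (by simp) (t, x, z)).hasFDerivAt
  have hl : HasDerivAt (fun s : ℝ => ((t, s, z) : ℝ × ℝ × ℝ)) (0, 1, 0) x :=
    HasDerivAt.prodMk (hasDerivAt_const x t) (HasDerivAt.prodMk (hasDerivAt_id x) (hasDerivAt_const x z))
  exact hF.comp_hasDerivAt x hl

lemma slice_z (hu : Smooth3 u) (t x z : ℝ) :
    HasDerivAt (fun s => u t x s) (Dv (0, 0, 1) u t x z) z := by
  have hF : HasFDerivAt (fun p : ℝ × ℝ × ℝ => u p.1 p.2.1 p.2.2)
      (fderiv ℝ (fun p : ℝ × ℝ × ℝ => u p.1 p.2.1 p.2.2) (t, x, z)) (t, x, z) :=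
    (hu.differentiable (by simp) (t, x, z)).hasFDerivAt
  have hl : HasDerivAt (fun s : ℝ => ((t, x, s) : ℝ × ℝ × ℝ)) (0, 0, 1) z :=
    HasDerivAt.prodMk (hasDerivAt_const z t) (HasDerivAt.prodMk (hasDerivAt_const z x) (hasDerivAt_id z))
  exact hF.comp_hasDerivAt z hl

lemma Dt_eq (hu : Smooth3 u) : Dt u = Dv (1, 0, 0) u := by
  funext t x z; exact (slice_t hu t x z).deriv

lemma Dx_eq (hu : Smooth3 u) : Dx u = Dv (0, 1, 0) u := by
  funext t x z; exact (slice_x hu t x z).deriv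

lemma Dz_eq (hu : Smooth3 u) : Dz u = Dv (0, 0, 1) u := by
  funext t x z; exact (slice_z hu t x z).deriv

lemma smooth3_dv (hu : Smooth3 u) (c : ℝ × ℝ × ℝ) : Smooth3 (Dv c u) :=
  (hu.fderiv_right (by simp)).clm_apply contDiff_const

lemma smooth3_dt (hu : Smooth3 u) : Smooth3 (Dt u) := by
  rw [Dt_eq hu]; exact smooth3_dv hu _

lemma smooth3_dx (hu : Smooth3 u) : Smooth3 (Dx u) := by
  rw [Dx_eq hu]; exact smooth3_dv hu _

lemma smooth3_dz (hu : Smooth3 u) : Smooth3 (Dz u) := by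
  rw [Dz_eq hu]; exact smooth3_dv hu _

lemma Dv_comm (hu : Smooth3 u) (a b : ℝ × ℝ × ℝ) : Dv a (Dv b u) = Dv b (Dv a u) := by
  funext t x z
  set F : ℝ × ℝ × ℝ → ℝ := fun p => u p.1 p.2.1 p.2.2 with hFdef
  set p : ℝ × ℝ × ℝ := (t, x, z)
  have hdF : ∀ q, HasFDerivAt F (fderiv ℝ F q) q := fun q =>
    (hu.differentiable (by simp) q).hasFDerivAt
  have hF2 : HasFDerivAt (fderiv ℝ F) (fderiv ℝ (fderiv ℝ F) p) p :=
    (((hu.fderiv_right (m := 1) (by exact WithTop.coe_le_coe.mpr le_top)).differentiable (by simp)) p).hasFDerivAt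
  have hsym := second_derivative_symmetric hdF hF2 a b
  have key : ∀ c d : ℝ × ℝ × ℝ,
      fderiv ℝ (fun q => fderiv ℝ F q c) p d = fderiv ℝ (fderiv ℝ F) p d c := by
    intro c d
    have h3 := hF2.clm_apply (hasFDerivAt_const c p)
    rw [h3.fderiv]
    simp
  show fderiv ℝ (fun q => fderiv ℝ F q b) p a = fderiv ℝ (fun q => fderiv ℝ F q a) p b
  rw [key, key]
  exact hsym

lemma Dx_Dt (hu : Smooth3 u) : Dx (Dt u) = Dt (Dx u) := by
  rw [Dt_eq hu, Dx_eq (smooth3_dv hu _), Dx_eq hu, Dt_eq (smooth3_dv hu _), Dv_comm hu]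

lemma Dz_Dt (hu : Smooth3 u) : Dz (Dt u) = Dt (Dz u) := by
  rw [Dt_eq hu, Dz_eq (smooth3_dv hu _), Dz_eq hu, Dt_eq (smooth3_dv hu _), Dv_comm hu]

lemma Dx_Dz (hu : Smooth3 u) : Dx (Dz u) = Dz (Dx u) := by
  rw [Dz_eq hu, Dx_eq (smooth3_dv hu _), Dx_eq hu, Dz_eq (smooth3_dv hu _), Dv_comm hu]

lemma hderiv_t (hu : Smooth3 u) (t x z : ℝ) :
    HasDerivAt (fun s => u s x z) (Dt u t x z) t := by
  rw [Dt_eq hu]; exact slice_t hu t x z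

lemma hderiv_x (hu : Smooth3 u) (t x z : ℝ) :
    HasDerivAt (fun s => u t s z) (Dx u t x z) x := by
  rw [Dx_eq hu]; exact slice_x hu t x z

lemma hderiv_z (hu : Smooth3 u) (t x z : ℝ) :
    HasDerivAt (fun s => u t x s) (Dz u t x z) z := by
  rw [Dz_eq hu]; exact slice_z hu t x z

end Bouss

open Bouss

theorem boussinesq_conservation_identity
    (ψ v ρ : ℝ → ℝ → ℝ → ℝ) (hψ : Smooth3 ψ) (hv : Smooth3 v) (hρ : Smooth3 ρ)
    (g f N : ℝ) :
    (∀ t x z : ℝ,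
      Dx (fun t x z =>
          -g * ρ t x z + Dt (Dx ψ) t x z
            + Dz ψ t x z * (Dx (Dx ψ) t x z + Dz (Dz ψ) t x z)) t x z
        + Dz (fun t x z =>
            -f * v t x z + Dt (Dz ψ) t x z
              - Dx ψ t x z * (Dx (Dx ψ) t x z + Dz (Dz ψ) t x z)) t x z
      = Dt (fun t x z => Dx (Dx ψ) t x z + Dz (Dz ψ) t x z) t x z
          - g * Dx ρ t x z - f * Dz v t x z
          - Dx ψ t x z * Dz (fun t x z => Dx (Dx ψ) t x z + Dz (Dz ψ) t x z) t x z
          + Dz ψ t x z * Dx (fun t x z => Dx (Dx ψ) t x z + Dz (Dz ψ) t x z) t x z)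
    ∧ ((∀ t x z : ℝ,
          Dt (fun t x z => Dx (Dx ψ) t x z + Dz (Dz ψ) t x z) t x z
              - g * Dx ρ t x z - f * Dz v t x z
            = Dx ψ t x z * Dz (fun t x z => Dx (Dx ψ) t x z + Dz (Dz ψ) t x z) t x z
              - Dz ψ t x z * Dx (fun t x z => Dx (Dx ψ) t x z + Dz (Dz ψ) t x z) t x z) →
        ∀ t x z : ℝ,
          Dx (fun t x z =>
              -g * ρ t x z + Dt (Dx ψ) t x z
                + Dz ψ t x z * (Dx (Dx ψ) t x z + Dz (Dz ψ) t x z)) t x z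
            + Dz (fun t x z =>
                -f * v t x z + Dt (Dz ψ) t x z
                  - Dx ψ t x z * (Dx (Dx ψ) t x z + Dz (Dz ψ) t x z)) t x z = 0) := by
  have h1 : ∀ t x z : ℝ,
      Dx (fun t x z =>
          -g * ρ t x z + Dt (Dx ψ) t x z
            + Dz ψ t x z * (Dx (Dx ψ) t x z + Dz (Dz ψ) t x z)) t x z
        + Dz (fun t x z =>
            -f * v t x z + Dt (Dz ψ) t x z
              - Dx ψ t x z * (Dx (Dx ψ) t x z + Dz (Dz ψ) t x z)) t x z
      = Dt (fun t x z => Dx (Dx ψ) t x z + Dz (Dz ψ) t x z) t x z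
          - g * Dx ρ t x z - f * Dz v t x z
          - Dx ψ t x z * Dz (fun t x z => Dx (Dx ψ) t x z + Dz (Dz ψ) t x z) t x z
          + Dz ψ t x z * Dx (fun t x z => Dx (Dx ψ) t x z + Dz (Dz ψ) t x z) t x z := by
    intro t x z
    have hA := (((hderiv_x hρ t x z).const_mul (-g)).add
        (hderiv_x (smooth3_dt (smooth3_dx hψ)) t x z)).add
      ((hderiv_x (smooth3_dz hψ) t x z).mul
        ((hderiv_x (smooth3_dx (smooth3_dx hψ)) t x z).add
          (hderiv_x (smooth3_dz (smooth3_dz hψ)) t x z)))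
    have hB := (((hderiv_z hv t x z).const_mul (-f)).add
        (hderiv_z (smooth3_dt (smooth3_dz hψ)) t x z)).sub
      ((hderiv_z (smooth3_dx hψ) t x z).mul
        ((hderiv_z (smooth3_dx (smooth3_dx hψ)) t x z).add
          (hderiv_z (smooth3_dz (smooth3_dz hψ)) t x z)))
    have hT := (hderiv_t (smooth3_dx (smooth3_dx hψ)) t x z).add
      (hderiv_t (smooth3_dz (smooth3_dz hψ)) t x z)
    have hZ := (hderiv_z (smooth3_dx (smooth3_dx hψ)) t x z).add
      (hderiv_z (smooth3_dz (smooth3_dz hψ)) t x z)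
    have hX := (hderiv_x (smooth3_dx (smooth3_dx hψ)) t x z).add
      (hderiv_x (smooth3_dz (smooth3_dz hψ)) t x z)
    have eA : Dx (fun t x z =>
          -g * ρ t x z + Dt (Dx ψ) t x z
            + Dz ψ t x z * (Dx (Dx ψ) t x z + Dz (Dz ψ) t x z)) t x z
        = -g * Dx ρ t x z + Dx (Dt (Dx ψ)) t x z
            + (Dx (Dz ψ) t x z * (Dx (Dx ψ) t x z + Dz (Dz ψ) t x z)
              + Dz ψ t x z * (Dx (Dx (Dx ψ)) t x z + Dx (Dz (Dz ψ)) t x z)) := hA.deriv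
    have eB : Dz (fun t x z =>
          -f * v t x z + Dt (Dz ψ) t x z
            - Dx ψ t x z * (Dx (Dx ψ) t x z + Dz (Dz ψ) t x z)) t x z
        = -f * Dz v t x z + Dz (Dt (Dz ψ)) t x z
            - (Dz (Dx ψ) t x z * (Dx (Dx ψ) t x z + Dz (Dz ψ) t x z)
              + Dx ψ t x z * (Dz (Dx (Dx ψ)) t x z + Dz (Dz (Dz ψ)) t x z)) := hB.deriv
    have eT : Dt (fun t x z => Dx (Dx ψ) t x z + Dz (Dz ψ) t x z) t x z
        = Dt (Dx (Dx ψ)) t x z + Dt (Dz (Dz ψ)) t x z := hT.deriv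
    have eZ : Dz (fun t x z => Dx (Dx ψ) t x z + Dz (Dz ψ) t x z) t x z
        = Dz (Dx (Dx ψ)) t x z + Dz (Dz (Dz ψ)) t x z := hZ.deriv
    have eX : Dx (fun t x z => Dx (Dx ψ) t x z + Dz (Dz ψ) t x z) t x z
        = Dx (Dx (Dx ψ)) t x z + Dx (Dz (Dz ψ)) t x z := hX.deriv
    rw [eA, eB, eT, eZ, eX, Dx_Dt (smooth3_dx hψ), Dz_Dt (smooth3_dz hψ), Dx_Dz hψ]
    ring
  refine ⟨h1, fun H t x z => ?_⟩
  have e := h1 t x z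
  have h := H t x z
  linarith [e, h]
end
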